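/- Let f : S¹ × ℝ → ℝⁿ be a C² conformal immersion of the cylinder with ∫_{S¹×ℝ}|A_f|² dμ_f < ∞, and suppose that the limits κ⁺ := lim_{t→+∞} ∫_{S¹×{t}} κ_f ds_f and κ⁻ := lim_{t→−∞} ∫_{S¹×{t}} κ_f ds_f exist and equal 2m⁺π and 2m⁻π respectively for integers m⁺, m⁻. If for every t one has ∫_{S¹×{t}} κ_f ds_f ≠ 2mπ + π for all integers m (i.e., f is a trivial bubble), then ∫_{S¹×ℝ} K_f dμ_f = 0. -/

import Mathlib

open MeasureTheory Real Filter

noncomputable section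

/-- Laplacian of a function on `ℝ²`. -/
def lap (φ : ℝ × ℝ → ℝ) (p : ℝ × ℝ) : ℝ :=
  fderiv ℝ (fun q => fderiv ℝ φ q (1, 0)) p (1, 0) +
  fderiv ℝ (fun q => fderiv ℝ φ q (0, 1)) p (0, 1)

variable {n : ℕ}

def d1 (f : ℝ × ℝ → EuclideanSpace ℝ (Fin n)) (p : ℝ × ℝ) : EuclideanSpace ℝ (Fin n) :=
  fderiv ℝ f p (1, 0)

def d2 (f : ℝ × ℝ → EuclideanSpace ℝ (Fin n)) (p : ℝ × ℝ) : EuclideanSpace ℝ (Fin n) :=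
  fderiv ℝ f p (0, 1)

def dd (f : ℝ × ℝ → EuclideanSpace ℝ (Fin n)) (v w p : ℝ × ℝ) : EuclideanSpace ℝ (Fin n) :=
  fderiv ℝ (fun q => fderiv ℝ f q v) p w

/-- `f` is a conformal immersion with conformal factor `e^{2u}` at `p`. -/
def IsConformalFactorAt (f : ℝ × ℝ → EuclideanSpace ℝ (Fin n)) (u : ℝ × ℝ → ℝ)
    (p : ℝ × ℝ) : Prop :=
  (inner ℝ (d1 f p) (d2 f p) : ℝ) = 0 ∧
  ‖d1 f p‖ ^ 2 = Real.exp (2 * u p) ∧ ‖d2 f p‖ ^ 2 = Real.exp (2 * u p)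

/-- Second fundamental form (normal part of the second derivative). -/
def sff (f : ℝ × ℝ → EuclideanSpace ℝ (Fin n)) (u : ℝ × ℝ → ℝ) (v w p : ℝ × ℝ) :
    EuclideanSpace ℝ (Fin n) :=
  dd f v w p - Real.exp (-(2 * u p)) •
    ((inner ℝ (dd f v w p) (d1 f p) : ℝ) • d1 f p + (inner ℝ (dd f v w p) (d2 f p) : ℝ) • d2 f p)

/-- `|A_f|²` w.r.t. the induced metric `e^{2u}δ`. -/
def normAsq (f : ℝ × ℝ → EuclideanSpace ℝ (Fin n)) (u : ℝ × ℝ → ℝ) (p : ℝ × ℝ) : ℝ :=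
  Real.exp (-(4 * u p)) * (‖sff f u (1, 0) (1, 0) p‖ ^ 2 + 2 * ‖sff f u (1, 0) (0, 1) p‖ ^ 2 +
    ‖sff f u (0, 1) (0, 1) p‖ ^ 2)

/-- Gauss curvature of the conformal metric `e^{2u}δ`. -/
def gaussK (u : ℝ × ℝ → ℝ) (p : ℝ × ℝ) : ℝ := -Real.exp (-(2 * u p)) * lap u p

/-- Total geodesic curvature `∫_{S¹×{t}} κ_f ds_f` of the circle at height `t`
of a conformal immersion of the cylinder (`S¹` of perimeter 1, points `(θ,t)`):
`κ_f ds_f = (∂u/∂t) dθ`. -/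
def kgTotal (u : ℝ × ℝ → ℝ) (t : ℝ) : ℝ :=
  ∫ θ in (0:ℝ)..1, fderiv ℝ u (θ, t) (0, 1)

/-- The cylinder `S¹ × I`, modelled as `(0,1] × I ⊆ ℝ²`. -/
def cyl (I : Set ℝ) : Set (ℝ × ℝ) := Set.Ioc (0:ℝ) 1 ×ˢ I


/-!
For the metric `e^{2u}(dθ² + dt²)` one has `K dμ = -Δu dθ dt` and `κ ds = ∂ₜu dθ`. Integrating
`Δu` over `S¹ × [a, b]`, the `∂²_θ u` term drops out by periodicity and Fubini plus the fundamental
theorem of calculus in `t` give Gauss–Bonnet: `∫_{S¹×[a,b]} K dμ = kgTotal u a - kgTotal u b`.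
Letting `a → -∞`, `b → ∞` yields `∫ K dμ = 2(m⁻ - m⁺)π`. Finally `kgTotal u` is continuous and
never an odd multiple of `π`, so by the intermediate value theorem its limits `2m⁺π`, `2m⁻π` agree.
-/

open Set Topology

section Calculus

variable {E : Type*} [NormedAddCommGroup E] [NormedSpace ℝ E]

lemma hasDerivAt_comp_mk_left {g : ℝ × ℝ → E} {x y : ℝ} (hg : DifferentiableAt ℝ g (x, y)) :
    HasDerivAt (fun s => g (s, y)) (fderiv ℝ g (x, y) (1, 0)) x :=
  hg.hasFDerivAt.comp_hasDerivAt x ((hasDerivAt_id x).prodMk (hasDerivAt_const x y))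

lemma hasDerivAt_comp_mk_right {g : ℝ × ℝ → E} {x y : ℝ} (hg : DifferentiableAt ℝ g (x, y)) :
    HasDerivAt (fun s => g (x, s)) (fderiv ℝ g (x, y) (0, 1)) y :=
  hg.hasFDerivAt.comp_hasDerivAt y ((hasDerivAt_const y x).prodMk (hasDerivAt_id y))

lemma fderiv_add_period {F : Type*} [NormedAddCommGroup F] [NormedSpace ℝ F] {g : F → E}
    {a : F} (hg : ∀ x, g (x + a) = g x) (x : F) : fderiv ℝ g (x + a) = fderiv ℝ g x := by
  rw [← fderiv_comp_add_right, funext hg]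

lemma ContDiff.contDiff_one_fderiv_apply {F : Type*} [NormedAddCommGroup F] [NormedSpace ℝ F]
    {g : F → E} (hg : ContDiff ℝ 2 g) (v : F) : ContDiff ℝ 1 (fun p => fderiv ℝ g p v) :=
  (hg.fderiv_right (by norm_num)).clm_apply contDiff_const

lemma ContDiff.continuous_fderiv_fderiv_apply {F : Type*} [NormedAddCommGroup F]
    [NormedSpace ℝ F] {g : F → E} (hg : ContDiff ℝ 2 g) (v w : F) :
    Continuous (fun p => fderiv ℝ (fun q => fderiv ℝ g q v) p w) :=
  ((hg.contDiff_one_fderiv_apply v).continuous_fderiv one_ne_zero).clm_apply continuous_const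

lemma integral_integral_swap_Ioc {F : ℝ × ℝ → E} (hF : Continuous F) (a b c d : ℝ) :
    ∫ t in Ioc c d, ∫ θ in Ioc a b, F (θ, t) = ∫ θ in Ioc a b, ∫ t in Ioc c d, F (θ, t) := by
  refine (integral_integral_swap (f := fun θ t => F (θ, t)) ?_).symm
  rw [Measure.prod_restrict]
  exact (hF.continuousOn.integrableOn_compact (isCompact_Icc.prod isCompact_Icc)).mono_set
    (prod_mono Ioc_subset_Icc_self Ioc_subset_Icc_self)

lemma integral_eq_sub_of_intervalIntegral_eq {H F : ℝ → E} (hH : Integrable H) {A B : E}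
    (hA : Tendsto F atTop (𝓝 A)) (hB : Tendsto F atBot (𝓝 B))
    (hHF : ∀ a b, a ≤ b → ∫ t in a..b, H t = F b - F a) : ∫ t, H t = A - B := by
  refine tendsto_nhds_unique
    (intervalIntegral_tendsto_integral hH tendsto_neg_atTop_atBot tendsto_id) ?_
  refine ((hA.comp tendsto_id).sub (hB.comp tendsto_neg_atTop_atBot)).congr' ?_
  filter_upwards [eventually_ge_atTop 0] with r hr
  exact (hHF (-r) r (by linarith)).symm

end Calculus

lemma Continuous.exists_eq_of_tendsto {X : Type*} [TopologicalSpace X] [PreconnectedSpace X]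
    {g : X → ℝ} (hg : Continuous g) {l₁ l₂ : Filter X} [l₁.NeBot] [l₂.NeBot] {x y c : ℝ}
    (h₁ : Tendsto g l₁ (𝓝 x)) (h₂ : Tendsto g l₂ (𝓝 y)) (hxc : x < c) (hcy : c < y) :
    ∃ t, g t = c := by
  obtain ⟨s, hs⟩ := (h₁.eventually_lt_const hxc).exists
  obtain ⟨r, hr⟩ := (h₂.eventually_const_lt hcy).exists
  exact intermediate_value_univ s r hg ⟨hs.le, hr.le⟩

lemma int_le_of_tendsto_of_ne_odd_mul_pi {X : Type*} [TopologicalSpace X] [PreconnectedSpace X]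
    {g : X → ℝ} (hg : Continuous g) {l₁ l₂ : Filter X} [l₁.NeBot] [l₂.NeBot] {a b : ℤ}
    (ha : Tendsto g l₁ (𝓝 (2 * a * π))) (hb : Tendsto g l₂ (𝓝 (2 * b * π)))
    (hodd : ∀ t, ∀ m : ℤ, g t ≠ 2 * m * π + π) : a ≤ b := by
  by_contra! hba
  have hba' : (b : ℝ) + 1 ≤ a := by exact_mod_cast hba
  obtain ⟨t, ht⟩ := hg.exists_eq_of_tendsto hb ha (c := 2 * b * π + π) (by linarith [pi_pos])
    (by nlinarith [pi_pos])
  exact hodd t b ht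

section GaussBonnet

variable {u : ℝ × ℝ → ℝ} (hu : ContDiff ℝ 2 u)
include hu

lemma intervalIntegral_fderiv_fderiv_fst_eq_zero (huper : ∀ θ t, u (θ + 1, t) = u (θ, t))
    (t : ℝ) : ∫ θ in (0 : ℝ)..1, fderiv ℝ (fun q => fderiv ℝ u q (1, 0)) (θ, t) (1, 0) = 0 := by
  have hper : ∀ p : ℝ × ℝ, u (p + (1, 0)) = u p := fun ⟨θ, t⟩ => by simpa using huper θ t
  rw [intervalIntegral.integral_eq_sub_of_hasDerivAt
    (fun θ _ => hasDerivAt_comp_mk_left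
      (((hu.contDiff_one_fderiv_apply (1, 0)).differentiable one_ne_zero) (θ, t)))
    (((hu.continuous_fderiv_fderiv_apply _ _).comp (by fun_prop)).intervalIntegrable 0 1)]
  simpa [sub_eq_zero] using congrArg (· (1, 0)) (fderiv_add_period hper (0, t))

lemma intervalIntegral_fderiv_fderiv_snd (θ a b : ℝ) :
    ∫ t in a..b, fderiv ℝ (fun q => fderiv ℝ u q (0, 1)) (θ, t) (0, 1) =
      fderiv ℝ u (θ, b) (0, 1) - fderiv ℝ u (θ, a) (0, 1) :=
  intervalIntegral.integral_eq_sub_of_hasDerivAt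
    (fun t _ => hasDerivAt_comp_mk_right
      (((hu.contDiff_one_fderiv_apply (0, 1)).differentiable one_ne_zero) (θ, t)))
    (((hu.continuous_fderiv_fderiv_apply _ _).comp (by fun_prop)).intervalIntegrable a b)

lemma intervalIntegral_integral_lap (huper : ∀ θ t, u (θ + 1, t) = u (θ, t)) {a b : ℝ}
    (hab : a ≤ b) :
    ∫ t in a..b, ∫ θ in Ioc (0 : ℝ) 1, lap u (θ, t) = kgTotal u b - kgTotal u a := by
  have hc₁₁ := hu.continuous_fderiv_fderiv_apply (1, 0) (1, 0)
  have hc₂₂ := hu.continuous_fderiv_fderiv_apply (0, 1) (0, 1)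
  have hc₂ := (hu.contDiff_one_fderiv_apply (0, 1)).continuous
  have hint : ∀ {F : ℝ × ℝ → ℝ}, Continuous F → ∀ t, IntegrableOn (fun θ => F (θ, t)) (Ioc 0 1) :=
    fun hF _ => (hF.comp (by fun_prop)).integrableOn_Ioc
  have hslice : ∀ t, ∫ θ in Ioc (0 : ℝ) 1, lap u (θ, t) =
      ∫ θ in Ioc (0 : ℝ) 1, fderiv ℝ (fun q => fderiv ℝ u q (0, 1)) (θ, t) (0, 1) := fun t => by
    have h₁₁ := intervalIntegral_fderiv_fderiv_fst_eq_zero hu huper t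
    rw [intervalIntegral.integral_of_le zero_le_one] at h₁₁
    exact (integral_add (hint hc₁₁ t) (hint hc₂₂ t)).trans (by rw [h₁₁, zero_add])
  calc ∫ t in a..b, ∫ θ in Ioc (0 : ℝ) 1, lap u (θ, t)
      = ∫ t in Ioc a b, ∫ θ in Ioc (0 : ℝ) 1,
          fderiv ℝ (fun q => fderiv ℝ u q (0, 1)) (θ, t) (0, 1) := by
        simp only [intervalIntegral.integral_of_le hab, hslice]
    _ = ∫ θ in Ioc (0 : ℝ) 1, ∫ t in Ioc a b,
          fderiv ℝ (fun q => fderiv ℝ u q (0, 1)) (θ, t) (0, 1) :=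
        integral_integral_swap_Ioc hc₂₂ _ _ _ _
    _ = ∫ θ in Ioc (0 : ℝ) 1, (fderiv ℝ u (θ, b) (0, 1) - fderiv ℝ u (θ, a) (0, 1)) := by
        simp only [← intervalIntegral.integral_of_le hab, intervalIntegral_fderiv_fderiv_snd hu]
    _ = kgTotal u b - kgTotal u a := by
        rw [integral_sub (hint hc₂ b) (hint hc₂ a), kgTotal, kgTotal,
          intervalIntegral.integral_of_le zero_le_one, intervalIntegral.integral_of_le zero_le_one]

end GaussBonnet

lemma continuous_kgTotal {u : ℝ × ℝ → ℝ} (hu : ContDiff ℝ 2 u) : Continuous (kgTotal u) :=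
  intervalIntegral.continuous_parametric_intervalIntegral_of_continuous'
    (f := fun t θ => fderiv ℝ u (θ, t) (0, 1))
    ((hu.contDiff_one_fderiv_apply (0, 1)).continuous.comp continuous_swap) 0 1

lemma gaussK_mul_exp (u : ℝ × ℝ → ℝ) (p : ℝ × ℝ) : gaussK u p * exp (2 * u p) = -lap u p := by
  rw [gaussK, neg_mul, neg_mul, mul_right_comm, ← exp_add, neg_add_cancel, exp_zero, one_mul]

lemma restrict_cyl_univ :
    volume.restrict (cyl univ) = (volume.restrict (Ioc (0 : ℝ) 1)).prod volume := by
  rw [cyl, Measure.volume_eq_prod, ← Measure.restrict_prod_eq_prod_univ]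

theorem stmt8_general (u : ℝ × ℝ → ℝ) (mp mm : ℤ)
    (hu : ContDiff ℝ 2 u)
    (huper : ∀ θ t, u (θ + 1, t) = u (θ, t))
    (hK : IntegrableOn (fun p => gaussK u p * Real.exp (2 * u p)) (cyl Set.univ))
    (htop : Tendsto (kgTotal u) atTop (nhds (2 * mp * π)))
    (hbot : Tendsto (kgTotal u) atBot (nhds (2 * mm * π)))
    (htrivial : ∀ t : ℝ, ∀ m : ℤ, kgTotal u t ≠ 2 * m * π + π) :
    ∫ p in cyl Set.univ, gaussK u p * Real.exp (2 * u p) = 0 := by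
  have hm : mp = mm := le_antisymm
    (int_le_of_tendsto_of_ne_odd_mul_pi (continuous_kgTotal hu) htop hbot htrivial)
    (int_le_of_tendsto_of_ne_odd_mul_pi (continuous_kgTotal hu) hbot htop htrivial)
  simp only [gaussK_mul_exp] at hK ⊢
  rw [IntegrableOn, restrict_cyl_univ] at hK
  have hslices : Integrable fun t => ∫ θ in Ioc (0 : ℝ) 1, lap u (θ, t) := by
    simpa [integral_neg] using hK.neg.integral_prod_right
  have htotal : ∫ t, ∫ θ in Ioc (0 : ℝ) 1, lap u (θ, t) = 2 * mp * π - 2 * mm * π :=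
    integral_eq_sub_of_intervalIntegral_eq hslices htop hbot
      fun _ _ hab => intervalIntegral_integral_lap hu huper hab
  rw [restrict_cyl_univ, integral_prod_symm _ hK]
  simp only [integral_neg, htotal, hm, sub_self, neg_zero]

/-- a trivial bubble carries no total Gauss curvature: if `f` is a
conformal immersion of the cylinder with finite total curvature, the total
geodesic curvatures of the circles converge to `2m⁺π`, `2m⁻π` at the two ends,
and `∫_{S¹×{t}} κ_f ds_f` is never an odd multiple of `π`, then
`∫_{S¹×ℝ} K_f dμ_f = 0`. -/
theorem stmt8 (f : ℝ × ℝ → EuclideanSpace ℝ (Fin n)) (u : ℝ × ℝ → ℝ) (mp mm : ℤ)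
    (hf : ContDiff ℝ 2 f) (hu : ContDiff ℝ 2 u)
    (hperiodic : ∀ θ t, f (θ + 1, t) = f (θ, t))
    (huper : ∀ θ t, u (θ + 1, t) = u (θ, t))
    (hconf : ∀ p, IsConformalFactorAt f u p)
    (hA : IntegrableOn (fun p => normAsq f u p * Real.exp (2 * u p)) (cyl Set.univ))
    (hK : IntegrableOn (fun p => gaussK u p * Real.exp (2 * u p)) (cyl Set.univ))
    (htop : Tendsto (kgTotal u) atTop (nhds (2 * mp * π)))
    (hbot : Tendsto (kgTotal u) atBot (nhds (2 * mm * π)))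
    (htrivial : ∀ t : ℝ, ∀ m : ℤ, kgTotal u t ≠ 2 * m * π + π) :
    ∫ p in cyl Set.univ, gaussK u p * Real.exp (2 * u p) = 0 :=
  stmt8_general u mp mm hu huper hK htop hbot htrivial
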